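/- arXiv:1505.01582 — 4 statements merged into one kernel-verified Lean document; each statement's English description precedes it below -/
import Mathlib

section
/- Minimizing the normalized hypergraph cut NH-cut(𝒱₁,…,𝒱ₖ) = Σ_{j=1}^k vol(∂𝒱_j)/vol(𝒱_j) over k-way partitions 𝒱₁,…,𝒱ₖ of the vertex set 𝒱 of a hypergraph is equivalent to minimizing Trace(X̂ᵀ L X̂) over the same partitions, where L = I − D^{-1/2} H Δ^{-1} Hᵀ D^{-1/2} is the normalized hypergraph Laplacian and X̂ ∈ ℝ^{|𝒱|×k} is defined by X̂_{vj} = √(deg(v)/vol(𝒱_j)) · 1{v ∈ 𝒱_j} (which satisfies X̂ᵀX̂ = I). That is, for every partition, NH-cut(𝒱₁,…,𝒱ₖ) = Trace(X̂ᵀ L X̂), so the two minimization problems have the same minimizers. -/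
/-
Write `X̂ = D^{1/2} P C`, where `P` is the 0/1 indicator matrix of the partition and
`C = diag(vol(𝒱_j)^{-1/2})`. Then `X̂ᵀ X̂ = C (Pᵀ D P) C = C diag(vol(𝒱_j)) C = I`, and the `D^{±1/2}`
cancel in the second term of `X̂ᵀ L X̂`, whose `j`-th diagonal entry becomes
`vol(𝒱_j)⁻¹ ∑_{u,v ∈ 𝒱_j} (H Δ⁻¹ Hᵀ)_{uv} = vol(𝒱_j)⁻¹ ∑_e |e ∩ 𝒱_j|² / |e|`.
Since `vol(𝒱_j) = ∑_e |e ∩ 𝒱_j|`, this is exactly `1 - vol(∂𝒱_j) / vol(𝒱_j)`.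
-/

open Finset Matrix

noncomputable section

variable {n k : ℕ}

/-- Degree of a node `v` in the hypergraph with edge set `E`:
`deg(v) = ∑_{e ∈ E} H_{ve}`. -/
def degH (E : Finset (Finset (Fin n))) (v : Fin n) : ℝ :=
  ∑ e ∈ E, if v ∈ e then 1 else 0

/-- Volume of a set of nodes: `vol(S) = ∑_{v ∈ S} deg(v)`. -/
def volH (E : Finset (Finset (Fin n))) (S : Finset (Fin n)) : ℝ :=
  ∑ v ∈ S, degH E v

/-- The `j`-th class of the partition `ψ`. -/
def cls (ψ : Fin n → Fin k) (j : Fin k) : Finset (Fin n) :=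
  Finset.univ.filter fun v => ψ v = j

/-- Volume of the boundary of `S`:
`vol(∂S) = ∑_{e ∈ ∂S} |e ∩ S| |e ∩ Sᶜ| / |e|` (edges not in `∂S` contribute `0`). -/
def boundaryVol (E : Finset (Finset (Fin n))) (S : Finset (Fin n)) : ℝ :=
  ∑ e ∈ E, ((e ∩ S).card : ℝ) * ((e.card : ℝ) - ((e ∩ S).card : ℝ)) / (e.card : ℝ)

/-- The normalized hypergraph cut `NH-cut(𝒱₁,…,𝒱ₖ) = ∑_j vol(∂𝒱_j)/vol(𝒱_j)`. -/
def NHcut (E : Finset (Finset (Fin n))) (ψ : Fin n → Fin k) : ℝ :=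
  ∑ j : Fin k, boundaryVol E (cls ψ j) / volH E (cls ψ j)

/-- The matrix `H Δ⁻¹ Hᵀ`, with entries `∑_{e ∈ E} H_{ue} H_{ve} / |e|`. -/
def hAdj (E : Finset (Finset (Fin n))) : Matrix (Fin n) (Fin n) ℝ :=
  Matrix.of fun u v =>
    ∑ e ∈ E, ((if u ∈ e then (1 : ℝ) else 0) * (if v ∈ e then (1 : ℝ) else 0)) / (e.card : ℝ)

/-- The diagonal matrix `D^{-1/2}`. -/
def dInvSqrt (E : Finset (Finset (Fin n))) : Matrix (Fin n) (Fin n) ℝ :=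
  Matrix.diagonal fun v => (Real.sqrt (degH E v))⁻¹

/-- The normalized hypergraph Laplacian `L = I - D^{-1/2} H Δ⁻¹ Hᵀ D^{-1/2}`. -/
def hLap (E : Finset (Finset (Fin n))) : Matrix (Fin n) (Fin n) ℝ :=
  1 - dInvSqrt E * hAdj E * dInvSqrt E

/-- The matrix `X̂` with `X̂_{vj} = √(deg(v)/vol(𝒱_j)) 1{v ∈ 𝒱_j}`. -/
def Xhat (E : Finset (Finset (Fin n))) (ψ : Fin n → Fin k) : Matrix (Fin n) (Fin k) ℝ :=
  Matrix.of fun v j => if ψ v = j then Real.sqrt (degH E v / volH E (cls ψ j)) else 0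

lemma degH_nonneg (E : Finset (Finset (Fin n))) (v : Fin n) : 0 ≤ degH E v :=
  Finset.sum_nonneg fun _ _ => by split_ifs <;> norm_num

lemma volH_nonneg (E : Finset (Finset (Fin n))) (S : Finset (Fin n)) : 0 ≤ volH E S :=
  Finset.sum_nonneg fun v _ => degH_nonneg E v

lemma volH_cls_pos (E : Finset (Finset (Fin n))) (hdeg : ∀ v : Fin n, 0 < degH E v)
    {ψ : Fin n → Fin k} (hψ : Function.Surjective ψ) (j : Fin k) :
    0 < volH E (cls ψ j) := by
  obtain ⟨v, hv⟩ := hψ j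
  exact Finset.sum_pos' (fun u _ => degH_nonneg E u) ⟨v, by simp [cls, hv], hdeg v⟩

lemma sum_indicator_mem_eq_card_inter (e S : Finset (Fin n)) :
    ∑ v ∈ S, (if v ∈ e then (1 : ℝ) else 0) = ((e ∩ S).card : ℝ) := by
  rw [Finset.sum_boole, Finset.filter_mem_eq_inter, Finset.inter_comm]

lemma volH_eq_sum_card_inter (E : Finset (Finset (Fin n))) (S : Finset (Fin n)) :
    volH E S = ∑ e ∈ E, ((e ∩ S).card : ℝ) := by
  simp only [volH, degH]
  rw [Finset.sum_comm]
  exact Finset.sum_congr rfl fun e _ => sum_indicator_mem_eq_card_inter e S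

lemma boundaryVol_eq_volH_sub (E : Finset (Finset (Fin n))) (S : Finset (Fin n)) :
    boundaryVol E S = volH E S - ∑ e ∈ E, ((e ∩ S).card : ℝ) ^ 2 / (e.card : ℝ) := by
  rw [volH_eq_sum_card_inter, boundaryVol, ← Finset.sum_sub_distrib]
  refine Finset.sum_congr rfl fun e _ => ?_
  rcases e.eq_empty_or_nonempty with rfl | he
  · simp
  · have : (e.card : ℝ) ≠ 0 := by exact_mod_cast he.card_pos.ne'
    field_simp

lemma sum_sum_hAdj (E : Finset (Finset (Fin n))) (S : Finset (Fin n)) :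
    ∑ u ∈ S, ∑ v ∈ S, hAdj E u v = ∑ e ∈ E, ((e ∩ S).card : ℝ) ^ 2 / (e.card : ℝ) := by
  simp only [hAdj, Matrix.of_apply]
  rw [Finset.sum_congr rfl fun u (_ : u ∈ S) => Finset.sum_comm (s := S) (t := E), Finset.sum_comm]
  refine Finset.sum_congr rfl fun e _ => ?_
  simp only [← Finset.sum_div, ← Finset.sum_mul_sum, sum_indicator_mem_eq_card_inter, sq]

def partitionMatrix (ψ : Fin n → Fin k) : Matrix (Fin n) (Fin k) ℝ :=
  Matrix.of fun v j => if ψ v = j then 1 else 0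

lemma partitionMatrix_transpose_mul_mul_apply (ψ : Fin n → Fin k)
    (M : Matrix (Fin n) (Fin n) ℝ) (i j : Fin k) :
    ((partitionMatrix ψ)ᵀ * M * partitionMatrix ψ) i j = ∑ u ∈ cls ψ i, ∑ v ∈ cls ψ j, M u v := by
  rw [Matrix.mul_assoc]
  simp only [Matrix.mul_apply, Matrix.transpose_apply, partitionMatrix, Matrix.of_apply, ite_mul,
    one_mul, zero_mul, mul_ite, mul_one, mul_zero, ← Finset.sum_filter]
  rfl

lemma partitionMatrix_transpose_mul_diagonal_mul (ψ : Fin n → Fin k) (d : Fin n → ℝ) :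
    (partitionMatrix ψ)ᵀ * Matrix.diagonal d * partitionMatrix ψ
      = Matrix.diagonal fun j => ∑ v ∈ cls ψ j, d v := by
  ext i j
  rw [partitionMatrix_transpose_mul_mul_apply]
  by_cases h : i = j
  · subst h
    simp [Matrix.diagonal_apply]
  · simp only [Matrix.diagonal_apply, Finset.sum_ite_eq, Finset.sum_ite_mem]
    have hij : cls ψ i ∩ cls ψ j = ∅ := Finset.disjoint_iff_inter_eq_empty.1 <|
      Finset.disjoint_filter.2 fun v _ hi hj => h (hi.symm.trans hj)
    simp [hij, h]

lemma Xhat_eq (E : Finset (Finset (Fin n))) (ψ : Fin n → Fin k) :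
    Xhat E ψ = Matrix.diagonal (fun v => √(degH E v)) * partitionMatrix ψ *
      Matrix.diagonal (fun j => (√(volH E (cls ψ j)))⁻¹) := by
  ext v j
  rw [Xhat, Matrix.of_apply, Real.sqrt_div (degH_nonneg E v)]
  simp only [partitionMatrix, Matrix.of_apply, Matrix.mul_diagonal, Matrix.diagonal_mul]
  split_ifs <;> simp [div_eq_mul_inv]

lemma Xhat_transpose_mul_Xhat (E : Finset (Finset (Fin n))) (ψ : Fin n → Fin k)
    (hvol : ∀ j, 0 < volH E (cls ψ j)) : (Xhat E ψ)ᵀ * Xhat E ψ = 1 := by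
  set C := Matrix.diagonal fun j => (√(volH E (cls ψ j)))⁻¹
  set P := partitionMatrix ψ
  have hsq : Matrix.diagonal (fun v => √(degH E v)) * Matrix.diagonal (fun v => √(degH E v))
      = Matrix.diagonal (degH E) := by
    rw [Matrix.diagonal_mul_diagonal]
    exact congrArg _ (funext fun v => Real.mul_self_sqrt (degH_nonneg E v))
  calc (Xhat E ψ)ᵀ * Xhat E ψ
      = C * (Pᵀ * Matrix.diagonal (degH E) * P) * C := by
        simp only [Xhat_eq, Matrix.transpose_mul, Matrix.diagonal_transpose, ← hsq,
          Matrix.mul_assoc]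
        rfl
    _ = 1 := by
        rw [partitionMatrix_transpose_mul_diagonal_mul, Matrix.diagonal_mul_diagonal,
          Matrix.diagonal_mul_diagonal, ← Matrix.diagonal_one]
        refine congrArg _ (funext fun j => ?_)
        have hs : √(volH E (cls ψ j)) ≠ 0 := (Real.sqrt_pos.2 (hvol j)).ne'
        field_simp
        rw [Real.sq_sqrt (hvol j).le]
        rfl

lemma Xhat_transpose_mul_dInvSqrt_hAdj_dInvSqrt_mul_Xhat_apply_self (E : Finset (Finset (Fin n)))
    (hdeg : ∀ v : Fin n, 0 < degH E v) (ψ : Fin n → Fin k) (j : Fin k) :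
    ((Xhat E ψ)ᵀ * (dInvSqrt E * hAdj E * dInvSqrt E) * Xhat E ψ) j j
      = (∑ e ∈ E, ((e ∩ cls ψ j).card : ℝ) ^ 2 / (e.card : ℝ)) / volH E (cls ψ j) := by
  set Dh := Matrix.diagonal fun v => √(degH E v)
  set P := partitionMatrix ψ
  set C := Matrix.diagonal fun j => (√(volH E (cls ψ j)))⁻¹
  have hs : ∀ v, √(degH E v) ≠ 0 := fun v => (Real.sqrt_pos.2 (hdeg v)).ne'
  have hleft : Dh * dInvSqrt E = 1 := by
    rw [dInvSqrt, Matrix.diagonal_mul_diagonal, ← Matrix.diagonal_one]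
    exact congrArg _ (funext fun v => mul_inv_cancel₀ (hs v))
  have hright : dInvSqrt E * Dh = 1 := by
    rw [dInvSqrt, Matrix.diagonal_mul_diagonal, ← Matrix.diagonal_one]
    exact congrArg _ (funext fun v => inv_mul_cancel₀ (hs v))
  have hmat : (Xhat E ψ)ᵀ * (dInvSqrt E * hAdj E * dInvSqrt E) * Xhat E ψ
      = C * (Pᵀ * hAdj E * P) * C := by
    simp only [Xhat_eq, Matrix.transpose_mul, Matrix.diagonal_transpose, Matrix.mul_assoc]
    rw [← Matrix.mul_assoc Dh, hleft, Matrix.one_mul, ← Matrix.mul_assoc (dInvSqrt E), hright,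
      Matrix.one_mul]
  rw [hmat, Matrix.mul_diagonal, Matrix.diagonal_mul, partitionMatrix_transpose_mul_mul_apply,
    sum_sum_hAdj, mul_right_comm, ← mul_inv, Real.mul_self_sqrt (volH_nonneg E _), inv_mul_eq_div]

theorem nhcut_eq_trace_general
    (E : Finset (Finset (Fin n)))
    (hdeg : ∀ v : Fin n, 0 < degH E v)
    (ψ : Fin n → Fin k) (hψ : Function.Surjective ψ) :
    (Xhat E ψ)ᵀ * Xhat E ψ = 1 ∧
    NHcut E ψ = Matrix.trace ((Xhat E ψ)ᵀ * hLap E * Xhat E ψ) := by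
  have hvol : ∀ j, 0 < volH E (cls ψ j) := volH_cls_pos E hdeg hψ
  have hX := Xhat_transpose_mul_Xhat E ψ hvol
  refine ⟨hX, ?_⟩
  rw [hLap, Matrix.mul_sub, Matrix.sub_mul, Matrix.mul_one, hX, Matrix.trace_sub, Matrix.trace_one,
    Fintype.card_fin, NHcut, Matrix.trace]
  simp only [Matrix.diag_apply, Xhat_transpose_mul_dInvSqrt_hAdj_dInvSqrt_mul_Xhat_apply_self E hdeg,
    boundaryVol_eq_volH_sub, sub_div, div_self (hvol _).ne', Finset.sum_sub_distrib,
    Finset.sum_const, Finset.card_univ, Fintype.card_fin, nsmul_eq_mul, mul_one]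

/-- Minimizing the normalized hypergraph cut over `k`-way partitions is the same problem as
minimizing `Trace(X̂ᵀ L X̂)`: for every partition `ψ`, `X̂ᵀ X̂ = I` and
`NH-cut(𝒱₁,…,𝒱ₖ) = Trace(X̂ᵀ L X̂)`; in particular the two problems have the same minimizers. -/
theorem nhcut_eq_trace
    (E : Finset (Finset (Fin n))) (hE : ∀ e ∈ E, 2 ≤ e.card)
    (hdeg : ∀ v : Fin n, 0 < degH E v)
    (ψ : Fin n → Fin k) (hψ : Function.Surjective ψ) :
    (Xhat E ψ)ᵀ * Xhat E ψ = 1 ∧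
    NHcut E ψ = Matrix.trace ((Xhat E ψ)ᵀ * hLap E * Xhat E ψ) :=
  nhcut_eq_trace_general E hdeg ψ hψ

end
end

section
/- Under the planted partition model for random hypergraphs, the population hypergraph Laplacian satisfies 𝓛 = I − 𝓓^{-1/2} 𝓐 𝓓^{-1/2}, where the population adjacency matrix 𝓐 = Σ_{j=1}^{β_M} (E[h_j]/|ξ_j|) a_{ξ_j} a_{ξ_j}ᵀ can be written as 𝓐 = Z G Zᵀ − J for some symmetric matrix G ∈ ℝ^{k×k} and a diagonal matrix J ∈ ℝ^{n×n} satisfying J_{ii} = J_{jj} whenever ψ_i = ψ_j. Furthermore, 𝓛 has k eigenvalues whose corresponding orthonormal eigenvectors are the columns of the matrix 𝓧 = Z(ZᵀZ)^{-1/2} U for some orthonormal matrix U ∈ ℝ^{k×k}. -/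
open MeasureTheory ProbabilityTheory Matrix Finset

noncomputable section

/-- The set of all possible edges: subsets of `Fin n` of cardinality between `2` and `M`. -/
def edgeSet (n M : ℕ) : Finset (Finset (Fin n)) :=
  Finset.univ.filter fun ξ => 2 ≤ ξ.card ∧ ξ.card ≤ M

/-- Indicator vector of a possible edge. -/
def aVec {n : ℕ} (ξ : Finset (Fin n)) : Fin n → ℝ := fun i => if i ∈ ξ then 1 else 0

/-- Degree vector associated with edge weights `w`. -/
def degOf (n M : ℕ) (w : Finset (Fin n) → ℝ) (i : Fin n) : ℝ :=
  ∑ ξ ∈ edgeSet n M, w ξ * aVec ξ i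

/-- Weighted adjacency matrix `∑_ξ (w ξ/|ξ|) a_ξ a_ξᵀ`. -/
def adjOf (n M : ℕ) (w : Finset (Fin n) → ℝ) : Matrix (Fin n) (Fin n) ℝ :=
  Matrix.of fun i j => ∑ ξ ∈ edgeSet n M, (w ξ / (ξ.card : ℝ)) * (aVec ξ i * aVec ξ j)

/-- Diagonal matrix with entries `(√ d_i)⁻¹`. -/
def invSqrtDiag {n : ℕ} (dv : Fin n → ℝ) : Matrix (Fin n) (Fin n) ℝ :=
  Matrix.diagonal fun i => (Real.sqrt (dv i))⁻¹

/-- Normalized hypergraph Laplacian associated with edge weights `w`. -/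
def lapOf (n M : ℕ) (w : Finset (Fin n) → ℝ) : Matrix (Fin n) (Fin n) ℝ :=
  1 - invSqrtDiag (degOf n M w) * adjOf n M w * invSqrtDiag (degOf n M w)

/-- Minimum expected degree. -/
def dminOf (n M : ℕ) (p : Finset (Fin n) → ℝ) : ℝ := ⨅ i, degOf n M p i

/-- Assignment matrix of a partition. -/
def assign {n k : ℕ} (ψ : Fin n → Fin k) : Matrix (Fin n) (Fin k) ℝ :=
  Matrix.of fun i c => if ψ i = c then 1 else 0

/-- Size of a class. -/
def clsSize {n k : ℕ} (ψ : Fin n → Fin k) (c : Fin k) : ℕ :=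
  (Finset.univ.filter fun i => ψ i = c).card

/-- Largest class size `n₁`. -/
def maxClsSize {n k : ℕ} (ψ : Fin n → Fin k) : ℕ := Finset.univ.sup (clsSize ψ)

/-- Smallest class size `n_k`. -/
def minClsSize {n k : ℕ} (ψ : Fin n → Fin k) : ℕ := sInf (Set.range (clsSize ψ))

/-- `(ZᵀZ)^{-1/2}` for the assignment matrix `Z`. -/
def invSqrtClsDiag {n k : ℕ} (ψ : Fin n → Fin k) : Matrix (Fin k) (Fin k) ℝ :=
  Matrix.diagonal fun c => (Real.sqrt (clsSize ψ c))⁻¹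

/-- Smallest (real) eigenvalue of a matrix. -/
def lambdaMin {k : ℕ} (G : Matrix (Fin k) (Fin k) ℝ) : ℝ :=
  sInf {μ : ℝ | ∃ v : Fin k → ℝ, v ≠ 0 ∧ G.mulVec v = μ • v}

/-- The identifiability parameter `δ`. -/
def deltaParam {n k : ℕ} (M : ℕ) (ψ : Fin n → Fin k) (p : Finset (Fin n) → ℝ)
    (G : Matrix (Fin k) (Fin k) ℝ) (J : Fin n → ℝ) : ℝ :=
  lambdaMin G * (⨅ i : Fin n, (clsSize ψ (ψ i) : ℝ) / degOf n M p i)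
    - ⨆ i : Fin n, ⨆ j : Fin n, |J i / degOf n M p i - J j / degOf n M p j|

/-- Euclidean norm of a vector. -/
def vecNorm {m : Type*} [Fintype m] (v : m → ℝ) : ℝ := Real.sqrt (∑ i, v i ^ 2)

/-- Frobenius norm of a matrix. -/
def frobNorm {m l : Type*} [Fintype m] [Fintype l] (A : Matrix m l ℝ) : ℝ :=
  Real.sqrt (∑ i, ∑ j, A i j ^ 2)

/-- Spectral norm of a square matrix. -/
def specNorm {n : ℕ} (A : Matrix (Fin n) (Fin n) ℝ) : ℝ :=
  sSup {c : ℝ | ∃ v : Fin n → ℝ, vecNorm v ≤ 1 ∧ c = vecNorm (A.mulVec v)}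

/-- Row-normalized version of a matrix. -/
def rowNormalize {n k : ℕ} (X : Matrix (Fin n) (Fin k) ℝ) : Matrix (Fin n) (Fin k) ℝ :=
  Matrix.of fun i j => X i j / vecNorm (X i)

/-- `X` is a matrix of `k` leading orthonormal eigenvectors of `L`: its columns are
orthonormal eigenvectors, and every eigenvector orthogonal to them has a larger eigenvalue. -/
def LeadingEigvecs {n k : ℕ} (L : Matrix (Fin n) (Fin n) ℝ)
    (X : Matrix (Fin n) (Fin k) ℝ) : Prop :=
  Xᵀ * X = 1 ∧ ∃ Λ : Fin k → ℝ, L * X = X * Matrix.diagonal Λ ∧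
    ∀ (μ : ℝ) (v : Fin n → ℝ), v ≠ 0 → L.mulVec v = μ • v → Xᵀ.mulVec v = 0 → ∀ a, Λ a ≤ μ

/-- Membership in `𝓜_{n×k}(r)`: at most `r` distinct rows. -/
def hasAtMostRows {n k : ℕ} (r : ℕ) (S : Matrix (Fin n) (Fin k) ℝ) : Prop :=
  (Set.range fun i : Fin n => S i).ncard ≤ r

/-- The `k`-means objective `η_r(X) = min_{S ∈ 𝓜(r)} ‖X - S‖_F`. -/
def kmeansObj {n k : ℕ} (r : ℕ) (X : Matrix (Fin n) (Fin k) ℝ) : ℝ :=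
  sInf {c : ℝ | ∃ S : Matrix (Fin n) (Fin k) ℝ, hasAtMostRows r S ∧ c = frobNorm (X - S)}

/-- Number of misclassified nodes, minimized over label permutations. -/
def errCount {n k : ℕ} (ψ ψ' : Fin n → Fin k) : ℕ :=
  sInf {m : ℕ | ∃ σ : Equiv.Perm (Fin k),
    m = (Finset.univ.filter fun i => ψ i ≠ σ (ψ' i)).card}


/-!
The weight of an edge depends only on the multiset of classes of its vertices, so `𝓐` and `𝓓`
are invariant under every permutation of the vertices that preserves the classes. These
permutations act transitively on ordered pairs of distinct vertices with prescribed classes, so the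
off-diagonal entries of `𝓐` and the entries of `𝓓` depend only on classes: `𝓐 = Z G Zᵀ - J`.
Hence `𝓛` maps the column span of `Z` into itself. As `𝓛` is symmetric and
`𝓧₀ = Z (ZᵀZ)^{-1/2}` has orthonormal columns, `𝓛 𝓧₀ = 𝓧₀ C` with `C = 𝓧₀ᵀ 𝓛 𝓧₀` symmetric,
and diagonalising `C = U diag(Λ) Uᵀ` gives the eigenvectors `𝓧₀ U`.
-/

section ColSpan

variable {m r : Type*} [Fintype m] [Fintype r]

def ColSpanInvariant (L : Matrix m m ℝ) (X : Matrix m r ℝ) : Prop :=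
  ∃ B : Matrix r r ℝ, L * X = X * B

namespace ColSpanInvariant

variable {L L' : Matrix m m ℝ} {X : Matrix m r ℝ}

theorem one [DecidableEq m] [DecidableEq r] : ColSpanInvariant (1 : Matrix m m ℝ) X :=
  ⟨1, by rw [Matrix.one_mul, Matrix.mul_one]⟩

theorem mul (h : ColSpanInvariant L X) (h' : ColSpanInvariant L' X) :
    ColSpanInvariant (L * L') X := by
  obtain ⟨B, hB⟩ := h
  obtain ⟨B', hB'⟩ := h'
  exact ⟨B * B', by rw [Matrix.mul_assoc, hB', ← Matrix.mul_assoc, hB, Matrix.mul_assoc]⟩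

theorem sub (h : ColSpanInvariant L X) (h' : ColSpanInvariant L' X) :
    ColSpanInvariant (L - L') X := by
  obtain ⟨B, hB⟩ := h
  obtain ⟨B', hB'⟩ := h'
  exact ⟨B - B', by rw [Matrix.sub_mul, Matrix.mul_sub, hB, hB']⟩

theorem mul_right [DecidableEq r] (h : ColSpanInvariant L X) {N N' : Matrix r r ℝ}
    (hN : N * N' = 1) : ColSpanInvariant L (X * N) := by
  obtain ⟨B, hB⟩ := h
  have hXB : X * B * N = X * (N * N') * B * N := by rw [hN, Matrix.mul_one]
  refine ⟨N' * B * N, ?_⟩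
  rw [← Matrix.mul_assoc, hB, hXB]
  simp only [Matrix.mul_assoc]

end ColSpanInvariant

theorem colSpanInvariant_mul_left (X : Matrix m r ℝ) (K : Matrix r m ℝ) :
    ColSpanInvariant (X * K) X :=
  ⟨K * X, Matrix.mul_assoc X K X⟩

theorem ColSpanInvariant.exists_orthonormal_eigenbasis [DecidableEq r] {L : Matrix m m ℝ}
    {X : Matrix m r ℝ} (hL : L.IsHermitian) (hX : Xᵀ * X = 1) (h : ColSpanInvariant L X) :
    ∃ (U : Matrix r r ℝ) (Λ : r → ℝ), Uᵀ * U = 1 ∧ U * Uᵀ = 1 ∧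
      (X * U)ᵀ * (X * U) = 1 ∧ L * (X * U) = (X * U) * Matrix.diagonal Λ := by
  obtain ⟨B, hB⟩ := h
  have hBX : B = Xᵀ * L * X := by
    rw [Matrix.mul_assoc, hB, ← Matrix.mul_assoc, hX, Matrix.one_mul]
  have hBH : B.IsHermitian := by
    rw [hBX, ← Matrix.conjTranspose_eq_transpose_of_trivial]
    exact Matrix.isHermitian_conjTranspose_mul_mul X hL
  set U : Matrix r r ℝ := (hBH.eigenvectorUnitary : Matrix r r ℝ)
  have hUU : Uᵀ * U = 1 := Matrix.mem_unitaryGroup_iff'.mp hBH.eigenvectorUnitary.2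
  have hUU' : U * Uᵀ = 1 := Matrix.mem_unitaryGroup_iff.mp hBH.eigenvectorUnitary.2
  have hdiag : Uᵀ * B * U = Matrix.diagonal hBH.eigenvalues := by
    simpa [Matrix.star_eq_conjTranspose] using hBH.conjStarAlgAut_star_eigenvectorUnitary
  refine ⟨U, hBH.eigenvalues, hUU, hUU', ?_, ?_⟩
  · rw [Matrix.transpose_mul, Matrix.mul_assoc, ← Matrix.mul_assoc Xᵀ, hX, Matrix.one_mul, hUU]
  · rw [← hdiag, ← Matrix.mul_assoc, hB, ← Matrix.mul_assoc, ← Matrix.mul_assoc,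
      Matrix.mul_assoc X U, hUU', Matrix.mul_one, Matrix.mul_assoc]

end ColSpan

section Assignment

variable {n k : ℕ} {ψ : Fin n → Fin k}

theorem assign_mul_mul_transpose_apply (G : Matrix (Fin k) (Fin k) ℝ) (i j : Fin n) :
    (assign ψ * G * (assign ψ)ᵀ) i j = G (ψ i) (ψ j) := by
  simp [assign, Matrix.mul_apply]

theorem transpose_assign_mul_assign :
    (assign ψ)ᵀ * assign ψ = Matrix.diagonal fun c => (clsSize ψ c : ℝ) := by
  ext c c'
  by_cases h : c = c'
  · subst h
    simp [assign, Matrix.mul_apply, clsSize, ← ite_and]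
  · simp [assign, Matrix.mul_apply, Matrix.diagonal_apply_ne _ h, ← ite_and]
    exact fun j hj hj' => h (hj'.symm.trans hj)

theorem diagonal_mul_assign {g : Fin n → ℝ} (hg : g.FactorsThrough ψ) :
    Matrix.diagonal g * assign ψ = assign ψ * Matrix.diagonal (Function.extend ψ g 0) := by
  ext i c
  by_cases h : ψ i = c
  · subst h
    simp [assign, hg.extend_apply]
  · simp [assign, h]

theorem colSpanInvariant_diagonal {g : Fin n → ℝ} (hg : g.FactorsThrough ψ) :
    ColSpanInvariant (Matrix.diagonal g) (assign ψ) :=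
  ⟨_, diagonal_mul_assign hg⟩

theorem clsSize_pos (hψ : Function.Surjective ψ) (c : Fin k) : 0 < clsSize ψ c := by
  obtain ⟨i, rfl⟩ := hψ c
  exact Finset.card_pos.mpr ⟨i, by simp⟩

theorem invSqrtClsDiag_mul_diagonal_sqrt (hψ : Function.Surjective ψ) :
    invSqrtClsDiag ψ * Matrix.diagonal (fun c => Real.sqrt (clsSize ψ c)) = 1 := by
  rw [invSqrtClsDiag, Matrix.diagonal_mul_diagonal, ← Matrix.diagonal_one]
  congr 1
  ext c
  have : 0 < Real.sqrt (clsSize ψ c) := Real.sqrt_pos.mpr (by exact_mod_cast clsSize_pos hψ c)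
  exact inv_mul_cancel₀ this.ne'

theorem transpose_mul_self_assign_mul_invSqrtClsDiag (hψ : Function.Surjective ψ) :
    (assign ψ * invSqrtClsDiag ψ)ᵀ * (assign ψ * invSqrtClsDiag ψ) = 1 := by
  rw [Matrix.transpose_mul, Matrix.mul_assoc, ← Matrix.mul_assoc (assign ψ)ᵀ,
    transpose_assign_mul_assign, invSqrtClsDiag, Matrix.diagonal_transpose,
    Matrix.diagonal_mul_diagonal, Matrix.diagonal_mul_diagonal, ← Matrix.diagonal_one]
  congr 1
  ext c
  have h : (0 : ℝ) < clsSize ψ c := by exact_mod_cast clsSize_pos hψ c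
  field_simp
  exact (Real.sq_sqrt h.le).symm

end Assignment

section ClassPreserving

variable {α β : Type*} [DecidableEq α] {ψ : α → β}

theorem apply_swap_eq_of_apply_eq {i i' : α} (h : ψ i = ψ i') (x : α) :
    ψ (Equiv.swap i i' x) = ψ x := by
  rcases eq_or_ne x i with rfl | hxi
  · rw [Equiv.swap_apply_left, h]
  rcases eq_or_ne x i' with rfl | hxi'
  · rw [Equiv.swap_apply_right, h]
  · rw [Equiv.swap_apply_of_ne_of_ne hxi hxi']

theorem exists_perm_apply_eq_pair {i j i' j' : α} (hij : i ≠ j) (hij' : i' ≠ j')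
    (hi : ψ i = ψ i') (hj : ψ j = ψ j') :
    ∃ σ : Equiv.Perm α, (∀ x, ψ (σ x) = ψ x) ∧ σ i = i' ∧ σ j = j' := by
  have hτ := apply_swap_eq_of_apply_eq hi
  have hτi : Equiv.swap i i' i ≠ Equiv.swap i i' j := (Equiv.swap i i').injective.ne hij
  rw [Equiv.swap_apply_left] at hτi
  refine ⟨(Equiv.swap i i').trans (Equiv.swap (Equiv.swap i i' j) j'), fun x => ?_, ?_, ?_⟩
  · rw [Equiv.trans_apply, apply_swap_eq_of_apply_eq ((hτ j).trans hj), hτ]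
  · rw [Equiv.trans_apply, Equiv.swap_apply_left, Equiv.swap_apply_of_ne_of_ne hτi hij']
  · rw [Equiv.trans_apply, Equiv.swap_apply_left]

theorem factorsThrough_of_perm_invariant {γ : Type*} {v : α → γ}
    (hv : ∀ σ : Equiv.Perm α, (∀ x, ψ (σ x) = ψ x) → ∀ i, v (σ i) = v i) :
    v.FactorsThrough ψ := by
  intro i i' h
  simpa using (hv _ (apply_swap_eq_of_apply_eq h) i).symm

end ClassPreserving

section ClassBlock

variable {n k : ℕ} {ψ : Fin n → Fin k} {A : Matrix (Fin n) (Fin n) ℝ}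

/-- The value of `A i j` for `i ≠ j`, read off as a function of the pair of classes
`(ψ i, ψ j)`; it is `0` on pairs of classes not realised by two distinct indices. -/
def classBlock (ψ : Fin n → Fin k) (A : Matrix (Fin n) (Fin n) ℝ) : Matrix (Fin k) (Fin k) ℝ :=
  Matrix.of fun c c' =>
    Function.extend (fun q : {q : Fin n × Fin n // q.1 ≠ q.2} => (ψ q.1.1, ψ q.1.2))
      (fun q => A q.1.1 q.1.2) 0 (c, c')

theorem classBlock_apply_of_ne
    (hA : ∀ σ : Equiv.Perm (Fin n), (∀ x, ψ (σ x) = ψ x) → ∀ i j, A (σ i) (σ j) = A i j)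
    {i j : Fin n} (hij : i ≠ j) :
    classBlock ψ A (ψ i) (ψ j) = A i j := by
  have hfac : (fun q : {q : Fin n × Fin n // q.1 ≠ q.2} => A q.1.1 q.1.2).FactorsThrough
      (fun q => (ψ q.1.1, ψ q.1.2)) := by
    rintro ⟨⟨i, j⟩, hij⟩ ⟨⟨i', j'⟩, hij'⟩ h
    obtain ⟨hi, hj⟩ := Prod.mk.inj h
    obtain ⟨σ, hσ, rfl, rfl⟩ := exists_perm_apply_eq_pair hij hij' hi hj
    exact (hA σ hσ i j).symm
  exact hfac.extend_apply 0 ⟨(i, j), hij⟩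

theorem classBlock_isHermitian
    (hA : ∀ σ : Equiv.Perm (Fin n), (∀ x, ψ (σ x) = ψ x) → ∀ i j, A (σ i) (σ j) = A i j)
    (hsymm : Aᵀ = A) : (classBlock ψ A).IsHermitian := by
  refine Matrix.IsHermitian.ext fun c c' => ?_
  rw [star_trivial]
  by_cases h : ∃ i j, i ≠ j ∧ ψ i = c ∧ ψ j = c'
  · obtain ⟨i, j, hij, rfl, rfl⟩ := h
    rw [classBlock_apply_of_ne hA hij, classBlock_apply_of_ne hA hij.symm,
      ← Matrix.transpose_apply A, hsymm]
  · have hzero : ∀ c c' : Fin k, (¬∃ i j, i ≠ j ∧ ψ i = c ∧ ψ j = c') →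
        classBlock ψ A c c' = 0 := by
      intro c c' hcc
      rw [classBlock, Matrix.of_apply, Function.extend_apply', Pi.zero_apply]
      rintro ⟨⟨⟨i, j⟩, hij⟩, hq⟩
      exact hcc ⟨i, j, hij, Prod.mk.inj hq⟩
    rw [hzero c c' h, hzero c' c fun ⟨i, j, hij, hi, hj⟩ => h ⟨j, i, hij.symm, hj, hi⟩]

theorem exists_eq_assign_mul_mul_transpose_sub_diagonal
    (hA : ∀ σ : Equiv.Perm (Fin n), (∀ x, ψ (σ x) = ψ x) → ∀ i j, A (σ i) (σ j) = A i j)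
    (hsymm : Aᵀ = A) :
    ∃ (G : Matrix (Fin k) (Fin k) ℝ) (J : Fin n → ℝ), G.IsHermitian ∧ J.FactorsThrough ψ ∧
      A = assign ψ * G * (assign ψ)ᵀ - Matrix.diagonal J := by
  refine ⟨classBlock ψ A, fun i => classBlock ψ A (ψ i) (ψ i) - A i i,
    classBlock_isHermitian hA hsymm, fun i i' h => ?_, ?_⟩
  · have hdiag : A i i = A i' i' := by
      simpa using (hA _ (apply_swap_eq_of_apply_eq h) i i).symm
    simp only [h, hdiag]
  · ext i j
    rw [Matrix.sub_apply, assign_mul_mul_transpose_apply]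
    rcases eq_or_ne i j with rfl | hij
    · simp
    · rw [Matrix.diagonal_apply_ne _ hij, sub_zero, classBlock_apply_of_ne hA hij]

end ClassBlock

section Hypergraph

variable {n M : ℕ} {w : Finset (Fin n) → ℝ}

theorem sum_edgeSet_map (σ : Equiv.Perm (Fin n)) (F : Finset (Fin n) → ℝ) :
    ∑ ξ ∈ edgeSet n M, F (ξ.map σ.toEmbedding) = ∑ ξ ∈ edgeSet n M, F ξ :=
  Finset.sum_equiv σ.finsetCongr (by simp [edgeSet]) (by simp)

theorem aVec_map_apply (σ : Equiv.Perm (Fin n)) (ξ : Finset (Fin n)) (i : Fin n) :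
    aVec (ξ.map σ.toEmbedding) (σ i) = aVec ξ i := by
  simp [aVec]

theorem adjOf_apply_perm {σ : Equiv.Perm (Fin n)} (hw : ∀ ξ, w (ξ.map σ.toEmbedding) = w ξ)
    (i j : Fin n) : adjOf n M w (σ i) (σ j) = adjOf n M w i j :=
  (sum_edgeSet_map σ _).symm.trans <| Finset.sum_congr rfl fun ξ _ => by
    rw [hw, Finset.card_map, aVec_map_apply, aVec_map_apply]

theorem degOf_apply_perm {σ : Equiv.Perm (Fin n)} (hw : ∀ ξ, w (ξ.map σ.toEmbedding) = w ξ)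
    (i : Fin n) : degOf n M w (σ i) = degOf n M w i :=
  (sum_edgeSet_map σ _).symm.trans <| Finset.sum_congr rfl fun ξ _ => by
    rw [hw, aVec_map_apply]

theorem apply_map_perm_eq {k : ℕ} {ψ : Fin n → Fin k}
    (hw : ∀ ξ ξ' : Finset (Fin n), Multiset.map ψ ξ.val = Multiset.map ψ ξ'.val → w ξ = w ξ')
    {σ : Equiv.Perm (Fin n)} (hσ : ∀ x, ψ (σ x) = ψ x) (ξ : Finset (Fin n)) :
    w (ξ.map σ.toEmbedding) = w ξ :=
  hw _ _ (by simp [Multiset.map_map, hσ])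

theorem adjOf_transpose : (adjOf n M w)ᵀ = adjOf n M w := by
  ext i j
  simp only [adjOf, Matrix.transpose_apply, Matrix.of_apply, mul_comm (aVec _ j)]

theorem lapOf_isHermitian : (lapOf n M w).IsHermitian := by
  rw [Matrix.IsHermitian, Matrix.conjTranspose_eq_transpose_of_trivial, lapOf, invSqrtDiag,
    Matrix.transpose_sub, Matrix.transpose_one, Matrix.transpose_mul, Matrix.transpose_mul,
    Matrix.diagonal_transpose, adjOf_transpose, Matrix.mul_assoc]

theorem colSpanInvariant_lapOf {k : ℕ} {ψ : Fin n → Fin k} {G : Matrix (Fin k) (Fin k) ℝ}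
    {J : Fin n → ℝ} (hA : adjOf n M w = assign ψ * G * (assign ψ)ᵀ - Matrix.diagonal J)
    (hJ : J.FactorsThrough ψ) (hd : (degOf n M w).FactorsThrough ψ) :
    ColSpanInvariant (lapOf n M w) (assign ψ) := by
  have hS : ColSpanInvariant (invSqrtDiag (degOf n M w)) (assign ψ) :=
    colSpanInvariant_diagonal fun i i' h => by rw [hd h]
  rw [lapOf, hA, Matrix.mul_assoc (assign ψ)]
  exact ColSpanInvariant.one.sub
    ((hS.mul ((colSpanInvariant_mul_left _ _).sub (colSpanInvariant_diagonal hJ))).mul hS)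

end Hypergraph

theorem population_laplacian_decomposition_general
    (n k M : ℕ)
    (ψ : Fin n → Fin k) (hsurj : Function.Surjective ψ)
    (p : Finset (Fin n) → ℝ)
    (hpsym : ∀ ξ ξ' : Finset (Fin n),
      Multiset.map ψ ξ.val = Multiset.map ψ ξ'.val → p ξ = p ξ') :
    lapOf n M p =
      1 - invSqrtDiag (degOf n M p) * adjOf n M p * invSqrtDiag (degOf n M p) ∧
    ∃ (G : Matrix (Fin k) (Fin k) ℝ) (J : Fin n → ℝ)
      (U : Matrix (Fin k) (Fin k) ℝ) (Λ : Fin k → ℝ),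
      G.IsHermitian ∧
      (∀ i j, ψ i = ψ j → J i = J j) ∧
      adjOf n M p = assign ψ * G * (assign ψ)ᵀ - Matrix.diagonal J ∧
      Uᵀ * U = 1 ∧ U * Uᵀ = 1 ∧
      (assign ψ * invSqrtClsDiag ψ * U)ᵀ * (assign ψ * invSqrtClsDiag ψ * U) = 1 ∧
      lapOf n M p * (assign ψ * invSqrtClsDiag ψ * U) =
        (assign ψ * invSqrtClsDiag ψ * U) * Matrix.diagonal Λ := by
  have hp (σ : Equiv.Perm (Fin n)) (hσ : ∀ x, ψ (σ x) = ψ x) := apply_map_perm_eq hpsym hσ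
  obtain ⟨G, J, hG, hJ, hA⟩ := exists_eq_assign_mul_mul_transpose_sub_diagonal
    (fun σ hσ => adjOf_apply_perm (M := M) (hp σ hσ)) adjOf_transpose
  have hL : ColSpanInvariant (lapOf n M p) (assign ψ) := colSpanInvariant_lapOf hA hJ
    (factorsThrough_of_perm_invariant fun σ hσ => degOf_apply_perm (hp σ hσ))
  obtain ⟨U, Λ, hUU, hUU', hX, hLX⟩ :=
    (hL.mul_right (invSqrtClsDiag_mul_diagonal_sqrt hsurj)).exists_orthonormal_eigenbasis
      lapOf_isHermitian (transpose_mul_self_assign_mul_invSqrtClsDiag hsurj)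
  exact ⟨rfl, G, J, U, Λ, hG, fun i j h => hJ h, hA, hUU, hUU', hX, hLX⟩

/-- Lemma 1: under the planted partition model, the population Laplacian is
`𝓛 = I - 𝓓^{-1/2} 𝓐 𝓓^{-1/2}`, where `𝓐 = Z G Zᵀ - J` for some symmetric `G ∈ ℝ^{k×k}` and a
diagonal `J` that is constant on the classes of `ψ`; moreover `𝓛` has `k` eigenvalues whose
orthonormal eigenvectors are the columns of `𝓧 = Z (ZᵀZ)^{-1/2} U` for an orthonormal `U`. -/
theorem population_laplacian_decomposition
    (n k M : ℕ) (hn : 0 < n) (hk : 0 < k)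
    (ψ : Fin n → Fin k) (hsurj : Function.Surjective ψ)
    (p : Finset (Fin n) → ℝ)
    (hp0 : ∀ ξ, 0 ≤ p ξ) (hp1 : ∀ ξ, p ξ ≤ 1)
    (hpcard : ∀ ξ, ξ ∉ edgeSet n M → p ξ = 0)
    (hpsym : ∀ ξ ξ' : Finset (Fin n),
      Multiset.map ψ ξ.val = Multiset.map ψ ξ'.val → p ξ = p ξ')
    (hDpos : ∀ i, 0 < degOf n M p i) :
    lapOf n M p =
      1 - invSqrtDiag (degOf n M p) * adjOf n M p * invSqrtDiag (degOf n M p) ∧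
    ∃ (G : Matrix (Fin k) (Fin k) ℝ) (J : Fin n → ℝ)
      (U : Matrix (Fin k) (Fin k) ℝ) (Λ : Fin k → ℝ),
      G.IsHermitian ∧
      (∀ i j, ψ i = ψ j → J i = J j) ∧
      adjOf n M p = assign ψ * G * (assign ψ)ᵀ - Matrix.diagonal J ∧
      Uᵀ * U = 1 ∧ U * Uᵀ = 1 ∧
      (assign ψ * invSqrtClsDiag ψ * U)ᵀ * (assign ψ * invSqrtClsDiag ψ * U) = 1 ∧
      lapOf n M p * (assign ψ * invSqrtClsDiag ψ * U) =
        (assign ψ * invSqrtClsDiag ψ * U) * Matrix.diagonal Λ :=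
  population_laplacian_decomposition_general n k M ψ hsurj p hpsym

end
end

section
/- Under the planted partition model for random hypergraphs, the eigen-gap of the population Laplacian dominates δ: if λ₁(𝓛) ≤ ⋯ ≤ λ_n(𝓛) denote the eigenvalues of 𝓛 in increasing order, then λ_{k+1}(𝓛) − λ_k(𝓛) ≥ δ, where δ = (λ_min(G) · min_{1≤i≤n} n_{ψ_i}/𝓓_{ii}) − max_{1≤i,j≤n} |J_{ii}/𝓓_{ii} − J_{jj}/𝓓_{jj}|. -/
open MeasureTheory ProbabilityTheory Matrix Finset

noncomputable section

/-! With `B = D^{-1/2} Z`, the decomposition of `𝓐` gives `𝓛 = I + diag(J/d) - B G Bᵀ`.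
On `ker Bᵀ`, of dimension at least `n - k`, the Rayleigh quotient of `𝓛` is at least
`1 + min J/d`, so by Courant–Fischer `λ_{k+1} ≥ 1 + min J/d`. On `range B`, of dimension `k`
since no class is empty, `BᵀB` is diagonal with entries `∑_{ψ i = c} 1/d_i ≥ q := min n_{ψ_i}/d_i`,
so there the Rayleigh quotient is at most `1 + max J/d - λ_min(G) q` when `λ_min(G) ≥ 0`; this
bounds `λ_k`. When `λ_min(G) < 0` we have `δ ≤ 0` and the claim is trivial. -/

lemma dotProduct_self_pos {ι : Type*} [Fintype ι] {v : ι → ℝ} (hv : v ≠ 0) : 0 < v ⬝ᵥ v := by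
  simpa using dotProduct_star_self_pos_iff.mpr hv

namespace Matrix.IsHermitian

section Span

variable {ι : Type*} [Fintype ι] [DecidableEq ι] {A : Matrix ι ι ℝ} (hA : A.IsHermitian)

def eigenvectorSpan (s : Finset ι) : Submodule ℝ (ι → ℝ) :=
  Submodule.span ℝ ((fun i => ⇑(hA.eigenvectorBasis i)) '' s)

lemma exists_coeffs_of_mem_eigenvectorSpan {s : Finset ι} {v : ι → ℝ}
    (hv : v ∈ hA.eigenvectorSpan s) :
    ∃ c : ι → ℝ, v ⬝ᵥ v = ∑ i ∈ s, c i ^ 2 ∧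
      v ⬝ᵥ A *ᵥ v = ∑ i ∈ s, hA.eigenvalues i * c i ^ 2 := by
  obtain ⟨c, rfl⟩ := (Submodule.mem_span_image_finset_iff_exists_fun' ℝ).mp hv
  have horth := hA.eigenvectorBasis.orthonormal
  have hv : ∑ i ∈ s, c i • ⇑(hA.eigenvectorBasis i)
      = WithLp.ofLp (∑ i ∈ s, c i • hA.eigenvectorBasis i) := by simp
  have hAv : A *ᵥ ∑ i ∈ s, c i • ⇑(hA.eigenvectorBasis i)
      = WithLp.ofLp (∑ i ∈ s, (hA.eigenvalues i * c i) • hA.eigenvectorBasis i) := by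
    simp [mulVec_sum, mulVec_smul, hA.mulVec_eigenvectorBasis, smul_smul, mul_comm]
  have hdot : ∀ x y : EuclideanSpace ℝ ι, x.ofLp ⬝ᵥ y.ofLp = inner ℝ y x := fun x y => by
    simp [EuclideanSpace.inner_eq_star_dotProduct]
  refine ⟨c, ?_, ?_⟩
  · rw [hv, hdot, horth.inner_sum]
    simp [sq]
  · rw [hAv, hv, hdot, horth.inner_sum]
    exact sum_congr rfl fun i _ => by simp only [conj_trivial]; ring

lemma dotProduct_mulVec_le_of_mem_eigenvectorSpan {s : Finset ι} {μ : ℝ}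
    (hμ : ∀ i ∈ s, hA.eigenvalues i ≤ μ) {v : ι → ℝ} (hv : v ∈ hA.eigenvectorSpan s) :
    v ⬝ᵥ A *ᵥ v ≤ μ * (v ⬝ᵥ v) := by
  obtain ⟨c, hvv, hvAv⟩ := hA.exists_coeffs_of_mem_eigenvectorSpan hv
  rw [hvv, hvAv, mul_sum]
  exact sum_le_sum fun i hi => mul_le_mul_of_nonneg_right (hμ i hi) (sq_nonneg _)

lemma le_dotProduct_mulVec_of_mem_eigenvectorSpan {s : Finset ι} {μ : ℝ}
    (hμ : ∀ i ∈ s, μ ≤ hA.eigenvalues i) {v : ι → ℝ} (hv : v ∈ hA.eigenvectorSpan s) :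
    μ * (v ⬝ᵥ v) ≤ v ⬝ᵥ A *ᵥ v := by
  obtain ⟨c, hvv, hvAv⟩ := hA.exists_coeffs_of_mem_eigenvectorSpan hv
  rw [hvv, hvAv, mul_sum]
  exact sum_le_sum fun i hi => mul_le_mul_of_nonneg_right (hμ i hi) (sq_nonneg _)

lemma finrank_eigenvectorSpan (s : Finset ι) :
    Module.finrank ℝ (hA.eigenvectorSpan s) = s.card := by
  have hli : LinearIndependent ℝ fun i => ⇑(hA.eigenvectorBasis i) :=
    hA.eigenvectorBasis.orthonormal.linearIndependent.map'
      (WithLp.linearEquiv 2 ℝ (ι → ℝ)).toLinearMap (WithLp.linearEquiv 2 ℝ (ι → ℝ)).ker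
  rw [eigenvectorSpan, Set.image_eq_range]
  exact (finrank_span_eq_card (hli.comp _ Subtype.val_injective)).trans (Fintype.card_coe s)

lemma eigenvectorSpan_univ : hA.eigenvectorSpan univ = ⊤ :=
  Submodule.eq_top_of_finrank_eq <| by
    rw [hA.finrank_eigenvectorSpan, card_univ, Module.finrank_fintype_fun_eq_card]

lemma exists_ne_zero_mem_inf_eigenvectorSpan (W : Submodule ℝ (ι → ℝ)) (s : Finset ι)
    (hdim : Fintype.card ι < s.card + Module.finrank ℝ W) :
    ∃ v ∈ W, v ∈ hA.eigenvectorSpan s ∧ v ≠ 0 := by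
  have hinf : W ⊓ hA.eigenvectorSpan s ≠ ⊥ := by
    intro hbot
    have hsum := Submodule.finrank_sup_add_finrank_inf_eq W (hA.eigenvectorSpan s)
    have hsup := Submodule.finrank_le (W ⊔ hA.eigenvectorSpan s)
    rw [hbot, finrank_bot, hA.finrank_eigenvectorSpan] at hsum
    rw [Module.finrank_fintype_fun_eq_card] at hsup
    omega
  obtain ⟨v, ⟨hvW, hvs⟩, hv0⟩ := Submodule.exists_mem_ne_zero_of_ne_bot hinf
  exact ⟨v, hvW, hvs, hv0⟩

end Span

section CourantFischer

variable {n : ℕ} {A : Matrix (Fin n) (Fin n) ℝ} (hA : A.IsHermitian) {σ : Equiv.Perm (Fin n)}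
  (hσ : Monotone fun i => hA.eigenvalues (σ i))
include hσ

lemma le_eigenvalues_of_le_dotProduct_mulVec {W : Submodule ℝ (Fin n → ℝ)} {μ : ℝ}
    (hW : ∀ v ∈ W, μ * (v ⬝ᵥ v) ≤ v ⬝ᵥ A *ᵥ v) (a : Fin n)
    (hdim : n < a + 1 + Module.finrank ℝ W) :
    μ ≤ hA.eigenvalues (σ a) := by
  obtain ⟨v, hvW, hvs, hv0⟩ := hA.exists_ne_zero_mem_inf_eigenvectorSpan W ((Iic a).image σ)
    (by rwa [card_image_of_injective _ σ.injective, Fin.card_Iic, Fintype.card_fin])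
  have hle : v ⬝ᵥ A *ᵥ v ≤ hA.eigenvalues (σ a) * (v ⬝ᵥ v) := by
    refine hA.dotProduct_mulVec_le_of_mem_eigenvectorSpan ?_ hvs
    simp only [mem_image, mem_Iic]
    rintro _ ⟨j, hj, rfl⟩
    exact hσ hj
  exact le_of_mul_le_mul_right ((hW v hvW).trans hle) (dotProduct_self_pos hv0)

lemma eigenvalues_le_of_dotProduct_mulVec_le {W : Submodule ℝ (Fin n → ℝ)} {μ : ℝ}
    (hW : ∀ v ∈ W, v ⬝ᵥ A *ᵥ v ≤ μ * (v ⬝ᵥ v)) (a : Fin n)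
    (hdim : (a : ℕ) < Module.finrank ℝ W) :
    hA.eigenvalues (σ a) ≤ μ := by
  obtain ⟨v, hvW, hvs, hv0⟩ := hA.exists_ne_zero_mem_inf_eigenvectorSpan W ((Ici a).image σ)
    (by rw [card_image_of_injective _ σ.injective, Fin.card_Ici, Fintype.card_fin]; omega)
  have hle : hA.eigenvalues (σ a) * (v ⬝ᵥ v) ≤ v ⬝ᵥ A *ᵥ v := by
    refine hA.le_dotProduct_mulVec_of_mem_eigenvectorSpan ?_ hvs
    simp only [mem_image, mem_Ici]
    rintro _ ⟨j, hj, rfl⟩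
    exact hσ hj
  exact le_of_mul_le_mul_right (hle.trans (hW v hvW)) (dotProduct_self_pos hv0)

end CourantFischer

end Matrix.IsHermitian

lemma lambdaMin_mul_dotProduct_le {k : ℕ} {G : Matrix (Fin k) (Fin k) ℝ} (hG : G.IsHermitian)
    (x : Fin k → ℝ) : lambdaMin G * (x ⬝ᵥ x) ≤ x ⬝ᵥ G *ᵥ x := by
  rcases isEmpty_or_nonempty (Fin k) with hk | hk
  · simp [Subsingleton.elim x 0]
  obtain ⟨j, hj⟩ := Finite.exists_min hG.eigenvalues
  have hquad : ∀ v, hG.eigenvalues j * (v ⬝ᵥ v) ≤ v ⬝ᵥ G *ᵥ v := fun v =>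
    hG.le_dotProduct_mulVec_of_mem_eigenvectorSpan (fun i _ => hj i)
      (hG.eigenvectorSpan_univ ▸ Submodule.mem_top)
  have hbdd : BddBelow {μ : ℝ | ∃ v : Fin k → ℝ, v ≠ 0 ∧ G *ᵥ v = μ • v} := by
    refine ⟨hG.eigenvalues j, fun μ ⟨v, hv0, hGv⟩ => ?_⟩
    have hv := hquad v
    rw [hGv, dotProduct_smul, smul_eq_mul] at hv
    exact le_of_mul_le_mul_right hv (dotProduct_self_pos hv0)
  have hb0 : ⇑(hG.eigenvectorBasis j) ≠ 0 := fun h =>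
    hG.eigenvectorBasis.orthonormal.ne_zero j (by simpa using congrArg (WithLp.toLp 2) h)
  have hle : lambdaMin G ≤ hG.eigenvalues j :=
    csInf_le hbdd ⟨_, hb0, hG.mulVec_eigenvectorBasis j⟩
  calc lambdaMin G * (x ⬝ᵥ x) ≤ hG.eigenvalues j * (x ⬝ᵥ x) :=
        mul_le_mul_of_nonneg_right hle (by simpa using dotProduct_star_self_nonneg x)
    _ ≤ x ⬝ᵥ G *ᵥ x := hquad x

lemma dotProduct_one_add_diagonal_sub_mulVec {ι κ : Type*} [Fintype ι] [DecidableEq ι]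
    [Fintype κ] (t : ι → ℝ) (B : Matrix ι κ ℝ) (G : Matrix κ κ ℝ) (v : ι → ℝ) :
    v ⬝ᵥ (1 + diagonal t - B * G * Bᵀ) *ᵥ v
      = v ⬝ᵥ v + ∑ i, t i * v i ^ 2 - (Bᵀ *ᵥ v) ⬝ᵥ G *ᵥ (Bᵀ *ᵥ v) := by
  rw [sub_mulVec, add_mulVec, one_mulVec, dotProduct_sub, dotProduct_add, ← mulVec_mulVec,
    ← mulVec_mulVec, dotProduct_mulVec v B, ← mulVec_transpose]
  simp [dotProduct, mulVec_diagonal, sq, mul_left_comm]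

lemma mul_dotProduct_le_of_transpose_mul_eq_diagonal {ι κ : Type*} [Fintype ι] [Fintype κ]
    [DecidableEq κ] {B : Matrix ι κ ℝ} {s : κ → ℝ} (hB : Bᵀ * B = diagonal s) {q : ℝ}
    (hq : 0 ≤ q) (hs : ∀ c, q ≤ s c) (u : κ → ℝ) :
    q * ((B *ᵥ u) ⬝ᵥ (B *ᵥ u)) ≤ (Bᵀ *ᵥ (B *ᵥ u)) ⬝ᵥ (Bᵀ *ᵥ (B *ᵥ u)) := by
  rw [mulVec_mulVec, hB, dotProduct_mulVec, vecMul_mulVec, ← mulVec_transpose, hB,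
    diagonal_transpose]
  simp only [dotProduct, mulVec_diagonal, mul_sum]
  refine sum_le_sum fun c _ => ?_
  have := mul_le_mul_of_nonneg_right (hs c) (mul_nonneg (hq.trans (hs c)) (mul_self_nonneg (u c)))
  linarith

lemma sub_le_iSup_iSup_abs_sub {ι : Type*} [Finite ι] (f : ι → ℝ) (i j : ι) :
    f i - f j ≤ ⨆ i, ⨆ j, |f i - f j| :=
  (le_abs_self _).trans <| (le_ciSup (Set.finite_range _).bddAbove j).trans <|
    le_ciSup (f := fun i => ⨆ j, |f i - f j|) (Set.finite_range _).bddAbove i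

def scaledAssign {n k : ℕ} (d : Fin n → ℝ) (ψ : Fin n → Fin k) : Matrix (Fin n) (Fin k) ℝ :=
  invSqrtDiag d * assign ψ

section ScaledAssign

variable {n k : ℕ} {d : Fin n → ℝ} {ψ : Fin n → Fin k}

lemma scaledAssign_apply (i : Fin n) (c : Fin k) :
    scaledAssign d ψ i c = if ψ i = c then (√(d i))⁻¹ else 0 := by
  simp [scaledAssign, invSqrtDiag, assign, diagonal_mul]

lemma transpose_mul_scaledAssign (hd : ∀ i, 0 ≤ d i) :
    (scaledAssign d ψ)ᵀ * scaledAssign d ψ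
      = diagonal fun c => ∑ i ∈ univ.filter (ψ · = c), (d i)⁻¹ := by
  ext c c'
  simp only [mul_apply, transpose_apply, scaledAssign_apply, diagonal_apply, ite_mul, mul_ite,
    zero_mul, mul_zero]
  split_ifs with hcc'
  · subst hcc'
    rw [sum_filter]
    refine sum_congr rfl fun i _ => ?_
    split_ifs <;> simp [← mul_inv, Real.mul_self_sqrt (hd i)]
  · exact sum_eq_zero fun i _ => by split_ifs <;> simp_all

lemma scaledAssign_mulVec_injective (hψ : Function.Surjective ψ) (hd : ∀ i, 0 < d i) :
    Function.Injective (scaledAssign d ψ *ᵥ ·) := by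
  have hmulVec : ∀ u i, (scaledAssign d ψ *ᵥ u) i = (√(d i))⁻¹ * u (ψ i) := fun u i => by
    simp [mulVec, dotProduct, scaledAssign_apply]
  intro u u' h
  funext c
  obtain ⟨i, rfl⟩ := hψ c
  have hi := congrFun h i
  simp only [hmulVec] at hi
  exact mul_left_cancel₀ (inv_ne_zero (Real.sqrt_pos.mpr (hd i)).ne') hi

lemma iInf_clsSize_div_nonneg (hd : ∀ i, 0 ≤ d i) : 0 ≤ ⨅ i, (clsSize ψ (ψ i) : ℝ) / d i :=
  Real.iInf_nonneg fun i => div_nonneg (Nat.cast_nonneg _) (hd i)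

lemma iInf_clsSize_div_le_sum_inv {c : Fin k} (hc : c ∈ Set.range ψ) :
    ⨅ i, (clsSize ψ (ψ i) : ℝ) / d i ≤ ∑ i ∈ univ.filter (ψ · = c), (d i)⁻¹ := by
  obtain ⟨i₀, rfl⟩ := hc
  set q := ⨅ i, (clsSize ψ (ψ i) : ℝ) / d i
  have hcard : (0 : ℝ) < clsSize ψ (ψ i₀) := Nat.cast_pos.mpr (card_pos.mpr ⟨i₀, by simp⟩)
  calc q = ∑ _i ∈ univ.filter (ψ · = ψ i₀), q / clsSize ψ (ψ i₀) := by
        rw [sum_const, nsmul_eq_mul, ← clsSize]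
        field_simp
    _ ≤ ∑ i ∈ univ.filter (ψ · = ψ i₀), (d i)⁻¹ := by
        refine sum_le_sum fun i hi => ?_
        have hle := ciInf_le (Set.finite_range fun i => (clsSize ψ (ψ i) : ℝ) / d i).bddBelow i
        rw [(mem_filter.mp hi).2] at hle
        rwa [div_le_iff₀ hcard, inv_mul_eq_div]

end ScaledAssign

section Laplacian

variable {n k M : ℕ} {ψ : Fin n → Fin k} {p : Finset (Fin n) → ℝ}
  {G : Matrix (Fin k) (Fin k) ℝ} {J : Fin n → ℝ}

lemma lapOf_eq_one_add_diagonal_sub (hD : ∀ i, 0 < degOf n M p i)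
    (hGJ : adjOf n M p = assign ψ * G * (assign ψ)ᵀ - diagonal J) :
    lapOf n M p = 1 + diagonal (fun i => J i / degOf n M p i)
      - scaledAssign (degOf n M p) ψ * G * (scaledAssign (degOf n M p) ψ)ᵀ := by
  have hDJD : invSqrtDiag (degOf n M p) * diagonal J * invSqrtDiag (degOf n M p)
      = diagonal fun i => J i / degOf n M p i := by
    simp only [invSqrtDiag, diagonal_mul_diagonal]
    congr 1
    funext i
    rw [mul_comm, ← mul_assoc, ← mul_inv, Real.mul_self_sqrt (hD i).le, inv_mul_eq_div]
  rw [lapOf, hGJ, scaledAssign, transpose_mul, invSqrtDiag, diagonal_transpose, ← invSqrtDiag,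
    Matrix.mul_sub, Matrix.sub_mul, hDJD]
  simp only [Matrix.mul_assoc]
  abel

variable (hD : ∀ i, 0 < degOf n M p i)
  (hGJ : adjOf n M p = assign ψ * G * (assign ψ)ᵀ - diagonal J)
  (h𝓛 : (lapOf n M p).IsHermitian) {σ : Equiv.Perm (Fin n)}
  (hσ : Monotone fun i => h𝓛.eigenvalues (σ i))
include hD hGJ hσ

lemma one_add_le_eigenvalues_lapOf {τ : ℝ} (hτ : ∀ i, τ ≤ J i / degOf n M p i) (a : Fin n)
    (ha : k ≤ a) : 1 + τ ≤ h𝓛.eigenvalues (σ a) := by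
  set B := scaledAssign (degOf n M p) ψ
  refine h𝓛.le_eigenvalues_of_le_dotProduct_mulVec hσ (W := LinearMap.ker (mulVecLin Bᵀ))
    (fun v hv => ?_) a ?_
  · rw [lapOf_eq_one_add_diagonal_sub hD hGJ, dotProduct_one_add_diagonal_sub_mulVec,
      show Bᵀ *ᵥ v = 0 from LinearMap.mem_ker.mp hv, zero_dotProduct, sub_zero, add_mul, one_mul]
    gcongr
    rw [dotProduct, mul_sum]
    exact sum_le_sum fun i _ => by
      rw [← sq]; exact mul_le_mul_of_nonneg_right (hτ i) (sq_nonneg _)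
  · have hrank := LinearMap.finrank_range_add_finrank_ker (mulVecLin Bᵀ)
    have hrange := Submodule.finrank_le (LinearMap.range (mulVecLin Bᵀ))
    rw [Module.finrank_fin_fun] at hrank hrange
    omega

lemma eigenvalues_lapOf_le (hψ : Function.Surjective ψ) (hG : G.IsHermitian)
    (hG₀ : 0 ≤ lambdaMin G) {τ : ℝ} (hτ : ∀ i, J i / degOf n M p i ≤ τ) (a : Fin n)
    (ha : (a : ℕ) < k) :
    h𝓛.eigenvalues (σ a)
      ≤ 1 + τ - lambdaMin G * ⨅ i, (clsSize ψ (ψ i) : ℝ) / degOf n M p i := by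
  set B := scaledAssign (degOf n M p) ψ
  refine h𝓛.eigenvalues_le_of_dotProduct_mulVec_le hσ (W := LinearMap.range (mulVecLin B))
    (fun v hv => ?_) a ?_
  · obtain ⟨u, rfl⟩ := hv
    rw [mulVecLin_apply, lapOf_eq_one_add_diagonal_sub hD hGJ,
      dotProduct_one_add_diagonal_sub_mulVec]
    have hBB := mul_dotProduct_le_of_transpose_mul_eq_diagonal
      (transpose_mul_scaledAssign fun i => (hD i).le) (iInf_clsSize_div_nonneg fun i => (hD i).le)
      (fun c => iInf_clsSize_div_le_sum_inv (hψ.range_eq ▸ Set.mem_univ c)) u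
    have hGw := lambdaMin_mul_dotProduct_le hG (Bᵀ *ᵥ (B *ᵥ u))
    have hJ : ∑ i, J i / degOf n M p i * (B *ᵥ u) i ^ 2 ≤ τ * ((B *ᵥ u) ⬝ᵥ (B *ᵥ u)) := by
      rw [dotProduct, mul_sum]
      exact sum_le_sum fun i _ => by
        rw [← sq]; exact mul_le_mul_of_nonneg_right (hτ i) (sq_nonneg _)
    nlinarith [mul_le_mul_of_nonneg_left hBB hG₀]
  · rwa [LinearMap.finrank_range_of_inj (scaledAssign_mulVec_injective hψ hD),
      Module.finrank_fin_fun]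

end Laplacian

/-- The eigen-gap of the population Laplacian dominates `δ`: if the eigenvalues of `𝓛` are
listed in increasing order (via any sorting permutation of `h𝓛.eigenvalues`), then
`λ_{k+1}(𝓛) - λ_k(𝓛) ≥ δ`. -/
theorem eigengap_ge_delta
    (n k M : ℕ) (hk : 0 < k) (hkn : k < n)
    (ψ : Fin n → Fin k) (hsurj : Function.Surjective ψ)
    (p : Finset (Fin n) → ℝ)
    (hDpos : ∀ i, 0 < degOf n M p i)
    (G : Matrix (Fin k) (Fin k) ℝ) (J : Fin n → ℝ)
    (hG : G.IsHermitian)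
    (hGJ : adjOf n M p = assign ψ * G * (assign ψ)ᵀ - Matrix.diagonal J)
    (h𝓛 : (lapOf n M p).IsHermitian) :
    ∀ σ : Equiv.Perm (Fin n), Monotone (fun i => h𝓛.eigenvalues (σ i)) →
      deltaParam M ψ p G J ≤
        h𝓛.eigenvalues (σ ⟨k, hkn⟩) - h𝓛.eigenvalues (σ ⟨k - 1, by omega⟩) := by
  intro σ hσ
  have : Nonempty (Fin n) := ⟨⟨0, by omega⟩⟩
  set t := fun i => J i / degOf n M p i
  obtain ⟨imin, himin⟩ := Finite.exists_min t
  obtain ⟨imax, himax⟩ := Finite.exists_max t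
  have hupper := one_add_le_eigenvalues_lapOf hDpos hGJ h𝓛 hσ himin ⟨k, hkn⟩ le_rfl
  have hspread := sub_le_iSup_iSup_abs_sub t imax imin
  have hspread₀ : 0 ≤ ⨆ i, ⨆ j, |t i - t j| := by
    simpa using sub_le_iSup_iSup_abs_sub t imin imin
  have hq := iInf_clsSize_div_nonneg (ψ := ψ) fun i => (hDpos i).le
  rw [deltaParam]
  rcases le_or_gt 0 (lambdaMin G) with hG₀ | hG₀
  · have hlower := eigenvalues_lapOf_le hDpos hGJ h𝓛 hσ hsurj hG hG₀ himax ⟨k - 1, by omega⟩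
      (Nat.sub_one_lt hk.ne')
    linarith
  · have hgap := hσ (Fin.mk_le_mk.mpr (Nat.sub_le k 1) : (⟨k - 1, by omega⟩ : Fin n) ≤ ⟨k, hkn⟩)
    nlinarith [mul_nonpos_of_nonpos_of_nonneg hG₀.le hq]

end
end

section
/- Let X, 𝓧 ∈ ℝ^{n×k} each have orthonormal columns, let Xᵀ𝓧 = U₁ Σ U₂ᵀ be a singular value decomposition, and let cos θ₁ ≥ … ≥ cos θ_k be the singular values of Xᵀ𝓧 (the cosines of the canonical angles between the column spaces). Then ‖X − 𝓧 U₂ U₁ᵀ‖_F² = 2 Σ_{i=1}^k (1 − cos θ_i) ≤ 2 Σ_{i=1}^k (1 − cos² θ_i) ≤ 2k sin² θ₁; in particular ‖X − 𝓧 U₂ U₁ᵀ‖_F ≤ √(2k) · ‖sin Θ(X,𝓧)‖₂ where ‖sin Θ(X,𝓧)‖₂ = sin θ₁ = max_i sin θ_i. -/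
open MeasureTheory ProbabilityTheory Matrix Finset

noncomputable section

/-- Davis–Kahan-type bound: if `X, 𝓧` have orthonormal columns and `Xᵀ𝓧 = U₁ Σ U₂ᵀ` is an
SVD with singular values `cos θ₁ ≥ … ≥ cos θ_k` (the cosines of the canonical angles), then
`‖X - 𝓧U₂U₁ᵀ‖_F² = 2∑(1-cos θᵢ) ≤ 2∑(1-cos²θᵢ) ≤ 2k sin²θ_max`, so that
`‖X - 𝓧U₂U₁ᵀ‖_F ≤ √(2k) ‖sin Θ(X,𝓧)‖₂` where `‖sin Θ(X,𝓧)‖₂ = maxᵢ sin θᵢ`. -/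
theorem svd_sin_theta_bound
    (n k : ℕ) (hk : 0 < k)
    (X Y : Matrix (Fin n) (Fin k) ℝ)
    (hX : Xᵀ * X = 1) (hY : Yᵀ * Y = 1)
    (U₁ U₂ : Matrix (Fin k) (Fin k) ℝ)
    (hU₁ : U₁ᵀ * U₁ = 1) (hU₁' : U₁ * U₁ᵀ = 1)
    (hU₂ : U₂ᵀ * U₂ = 1) (hU₂' : U₂ * U₂ᵀ = 1)
    (cosθ : Fin k → ℝ) (hcos0 : ∀ i, 0 ≤ cosθ i) (hcos1 : ∀ i, cosθ i ≤ 1)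
    (hanti : Antitone cosθ)
    (hSVD : Xᵀ * Y = U₁ * Matrix.diagonal cosθ * U₂ᵀ) :
    frobNorm (X - Y * U₂ * U₁ᵀ) ^ 2 = 2 * ∑ i, (1 - cosθ i) ∧
    2 * ∑ i, (1 - cosθ i) ≤ 2 * ∑ i, (1 - cosθ i ^ 2) ∧
    2 * ∑ i, (1 - cosθ i ^ 2) ≤ 2 * (k : ℝ) * (⨆ i, (1 - cosθ i ^ 2)) ∧
    frobNorm (X - Y * U₂ * U₁ᵀ) ≤
      Real.sqrt (2 * (k : ℝ)) * (⨆ i, Real.sqrt (1 - cosθ i ^ 2)) := by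

  set A := X - Y * U₂ * U₁ᵀ with hA
  have hfin : BddAbove (Set.range fun i => 1 - cosθ i ^ 2) :=
    (Set.finite_range _).bddAbove
  have hfin2 : BddAbove (Set.range fun i => Real.sqrt (1 - cosθ i ^ 2)) :=
    (Set.finite_range _).bddAbove
  -- trace computation
  have h2 : (Y * U₂ * U₁ᵀ)ᵀ * (Y * U₂ * U₁ᵀ) = 1 := by
    have : (Y * U₂ * U₁ᵀ)ᵀ * (Y * U₂ * U₁ᵀ)
        = U₁ * (U₂ᵀ * ((Yᵀ * Y) * U₂)) * U₁ᵀ := by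
      simp [Matrix.transpose_mul, Matrix.mul_assoc]
    rw [this, hY, Matrix.one_mul, hU₂, Matrix.mul_one, hU₁']
  have h3 : Xᵀ * (Y * U₂ * U₁ᵀ) = U₁ * Matrix.diagonal cosθ * U₁ᵀ := by
    have : Xᵀ * (Y * U₂ * U₁ᵀ) = (Xᵀ * Y) * U₂ * U₁ᵀ := by
      simp [Matrix.mul_assoc]
    rw [this, hSVD]
    calc U₁ * Matrix.diagonal cosθ * U₂ᵀ * U₂ * U₁ᵀ
        = U₁ * Matrix.diagonal cosθ * (U₂ᵀ * U₂) * U₁ᵀ := by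
          simp [Matrix.mul_assoc]
      _ = U₁ * Matrix.diagonal cosθ * U₁ᵀ := by rw [hU₂, Matrix.mul_one]
  have htrD : Matrix.trace (U₁ * Matrix.diagonal cosθ * U₁ᵀ) = ∑ i, cosθ i := by
    rw [Matrix.trace_mul_comm, ← Matrix.mul_assoc, hU₁, Matrix.one_mul,
      Matrix.trace_diagonal]
  have hexp : Aᵀ * A = 1 - (U₁ * Matrix.diagonal cosθ * U₁ᵀ)
      - (U₁ * Matrix.diagonal cosθ * U₁ᵀ)ᵀ + 1 := by
    have h3' : (Y * U₂ * U₁ᵀ)ᵀ * X = (U₁ * Matrix.diagonal cosθ * U₁ᵀ)ᵀ := by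
      have := congrArg Matrix.transpose h3
      rwa [Matrix.transpose_mul, Matrix.transpose_transpose] at this
    rw [hA, Matrix.transpose_sub, Matrix.sub_mul, Matrix.mul_sub, Matrix.mul_sub,
      hX, h2, h3, h3']
    abel
  have htrace : Matrix.trace (Aᵀ * A) = 2 * ∑ i, (1 - cosθ i) := by
    rw [hexp]
    simp only [Matrix.trace_add, Matrix.trace_sub, Matrix.trace_transpose,
      Matrix.trace_one, htrD, Finset.sum_sub_distrib, Finset.sum_const,
      Finset.card_univ, Fintype.card_fin, nsmul_eq_mul, mul_one]
    ring
  have hsum : (∑ i, ∑ j, A i j ^ 2) = Matrix.trace (Aᵀ * A) := by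
    rw [Matrix.trace]
    rw [Finset.sum_comm]
    congr 1
    ext j
    simp [Matrix.mul_apply, Matrix.diag, sq]
  have hfrob_sq : frobNorm A ^ 2 = 2 * ∑ i, (1 - cosθ i) := by
    rw [frobNorm, Real.sq_sqrt (by positivity), hsum, htrace]
  have hineq1 : 2 * ∑ i, (1 - cosθ i) ≤ 2 * ∑ i, (1 - cosθ i ^ 2) := by
    have : ∀ i : Fin k, 1 - cosθ i ≤ 1 - cosθ i ^ 2 := fun i => by
      nlinarith [hcos0 i, hcos1 i]
    have h := Finset.sum_le_sum (s := Finset.univ) (fun i (_ : i ∈ Finset.univ) => this i)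
    linarith
  have hineq2 : 2 * ∑ i, (1 - cosθ i ^ 2) ≤ 2 * (k : ℝ) * (⨆ i, (1 - cosθ i ^ 2)) := by
    have hle : ∀ i : Fin k, 1 - cosθ i ^ 2 ≤ ⨆ j, (1 - cosθ j ^ 2) := fun i =>
      le_ciSup hfin i
    have := Finset.sum_le_sum (fun i (_ : i ∈ Finset.univ) => hle i)
    simp only [Finset.sum_const, Finset.card_univ, Fintype.card_fin,
      nsmul_eq_mul] at this
    nlinarith
  refine ⟨hfrob_sq, hineq1, hineq2, ?_⟩
  -- last inequality
  obtain ⟨i₀, hi₀⟩ : ∃ i₀ : Fin k, ∀ j, 1 - cosθ j ^ 2 ≤ 1 - cosθ i₀ ^ 2 := by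
    haveI : Nonempty (Fin k) := ⟨⟨0, hk⟩⟩
    obtain ⟨i₀, hi₀⟩ := Finite.exists_max fun i : Fin k => 1 - cosθ i ^ 2
    exact ⟨i₀, hi₀⟩
  haveI : Nonempty (Fin k) := ⟨⟨0, hk⟩⟩
  have hsup_eq : (⨆ i, (1 - cosθ i ^ 2)) = 1 - cosθ i₀ ^ 2 :=
    le_antisymm (ciSup_le hi₀) (le_ciSup hfin i₀)
  have hfrob_nonneg : 0 ≤ frobNorm A := Real.sqrt_nonneg _
  have key : frobNorm A ^ 2 ≤ (Real.sqrt (2 * (k : ℝ)) * Real.sqrt (1 - cosθ i₀ ^ 2)) ^ 2 := by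
    rw [mul_pow, Real.sq_sqrt (by positivity),
      Real.sq_sqrt (by nlinarith [hcos1 i₀, hcos0 i₀]), hfrob_sq]
    calc 2 * ∑ i, (1 - cosθ i) ≤ 2 * (k : ℝ) * (⨆ i, (1 - cosθ i ^ 2)) :=
          le_trans hineq1 hineq2
      _ = 2 * (k : ℝ) * (1 - cosθ i₀ ^ 2) := by rw [hsup_eq]
  have h4 : frobNorm A ≤ Real.sqrt (2 * (k : ℝ)) * Real.sqrt (1 - cosθ i₀ ^ 2) := by
    have hb : 0 ≤ Real.sqrt (2 * (k : ℝ)) * Real.sqrt (1 - cosθ i₀ ^ 2) := by positivity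
    nlinarith [key, hfrob_nonneg, hb]
  calc frobNorm A ≤ Real.sqrt (2 * (k : ℝ)) * Real.sqrt (1 - cosθ i₀ ^ 2) := h4
    _ ≤ Real.sqrt (2 * (k : ℝ)) * (⨆ i, Real.sqrt (1 - cosθ i ^ 2)) := by
        gcongr
        exact le_ciSup hfin2 i₀

end
end
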